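/- For a δ-ISS discrete-time control system Σ with Lipschitz output map (‖h(x)−h(y)‖ ≤ α(‖x−y‖) for a K∞ function α), any precision ε > 0, and quantization parameters q = (η, μ) satisfying β(α⁻¹(ε), 1) + γ(μ) + η ≤ α⁻¹(ε), the relation R = {(x, x_q) : ‖x − x_q‖ ≤ α⁻¹(ε)} is an ε-approximate initial-state opacity preserving simulation relation from S(Σ) to the symbolic model S_q(Σ), i.e., S(Σ) ⪯_I^ε S_q(Σ). -/
import Mathlib


open Metric Set Filter

section Defs

variable {X U Y Xa Ua Xb Ub : Type*}

/-- ε-approximate initial-state opacity preserving simulation relation from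
system `a` to system `b`. -/
def InitSOPSim [MetricSpace Y] (Xa0 XaS : Set Xa) (tra : Xa → Ua → Xa → Prop)
    (Ha : Xa → Y) (Xb0 XbS : Set Xb) (trb : Xb → Ub → Xb → Prop) (Hb : Xb → Y)
    (ε : ℝ) (R : Set (Xa × Xb)) : Prop :=
  (∀ xa0 ∈ Xa0 ∩ XaS, ∃ xb0 ∈ Xb0 ∩ XbS, (xa0, xb0) ∈ R) ∧
  (∀ xb0 ∈ Xb0 \ XbS, ∃ xa0 ∈ Xa0 \ XaS, (xa0, xb0) ∈ R) ∧
  (∀ p ∈ R, dist (Ha p.1) (Hb p.2) ≤ ε) ∧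
  (∀ p ∈ R, ∀ (ua : Ua) (xa' : Xa), tra p.1 ua xa' →
    ∃ (ub : Ub) (xb' : Xb), trb p.2 ub xb' ∧ (xa', xb') ∈ R) ∧
  (∀ p ∈ R, ∀ (ub : Ub) (xb' : Xb), trb p.2 ub xb' →
    ∃ (ua : Ua) (xa' : Xa), tra p.1 ua xa' ∧ (xa', xb') ∈ R)

/-- Class K function (continuous, strictly increasing on `[0,∞)`, zero at zero). -/
def ClassK (α : ℝ → ℝ) : Prop :=
  ContinuousOn α (Ici 0) ∧ StrictMonoOn α (Ici 0) ∧ α 0 = 0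

/-- Class K∞ function. -/
def ClassKInf (α : ℝ → ℝ) : Prop :=
  ClassK α ∧ Tendsto α atTop atTop

/-- Class KL function (with discrete time argument). -/
def ClassKLNat (β : ℝ → ℕ → ℝ) : Prop :=
  (∀ k : ℕ, ClassK (fun r => β r k)) ∧
  ∀ r : ℝ, 0 < r → Antitone (β r) ∧ Tendsto (β r) atTop (nhds 0)

/-- Solution map of the discrete-time control system `ξ(k+1) = f(ξ(k), υ(k))`. -/
def sol {E F : Type*} (f : E → F → E) (x : E) (υ : ℕ → F) : ℕ → E
  | 0 => x
  | k + 1 => f (sol f x υ k) (υ k)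

/-- The η-grid approximation `[A]_η` of a set `A ⊆ ℝ^N` (with the sup norm). -/
def gridApprox {N : ℕ} (η : ℝ) (A : Set (Fin N → ℝ)) : Set (Fin N → ℝ) :=
  {a ∈ A | ∀ i, ∃ k : ℤ, a i = k * η}

/-- `A` is a (nonempty) finite union of boxes, each of span at least `η`. -/
def UnionOfBoxesSpanGe {N : ℕ} (A : Set (Fin N → ℝ)) (η : ℝ) : Prop :=
  ∃ (M : ℕ) (c d : Fin M → Fin N → ℝ),
    (∀ j i, c j i < d j i) ∧ (∀ j i, η ≤ d j i - c j i) ∧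
    A = ⋃ j, {x | ∀ i, x i ∈ Icc (c j i) (d j i)}

/-- Incremental input-to-state stability (δ-ISS) of `f` on `𝕏` with inputs in `𝕌`,
witnessed by `β ∈ KL` and `γ ∈ K∞`; `c` plays the role of `‖υ - υ'‖_∞`. -/
def DeltaISS {N M : ℕ} (𝕏 : Set (Fin N → ℝ)) (𝕌 : Set (Fin M → ℝ))
    (f : (Fin N → ℝ) → (Fin M → ℝ) → Fin N → ℝ)
    (β : ℝ → ℕ → ℝ) (γ : ℝ → ℝ) : Prop :=
  ∀ x ∈ 𝕏, ∀ x' ∈ 𝕏, ∀ υ υ' : ℕ → Fin M → ℝ,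
    (∀ j, υ j ∈ 𝕌) → (∀ j, υ' j ∈ 𝕌) →
    ∀ c : ℝ, 0 ≤ c → (∀ j, ‖υ j - υ' j‖ ≤ c) →
    ∀ k : ℕ, ‖sol f x υ k - sol f x' υ' k‖ ≤ β ‖x - x'‖ k + γ c

end Defs


lemma exists_grid_in_Icc {η c d x : ℝ} (hη : 0 < η) (hcd : η ≤ d - c)
    (hx : x ∈ Icc c d) : ∃ k : ℤ, (k : ℝ) * η ∈ Icc c d ∧ |x - k * η| ≤ η := by
  obtain ⟨hxc, hxd⟩ := hx
  set k0 : ℤ := ⌊x / η⌋ with hk0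
  have h1 : (k0 : ℝ) * η ≤ x := by
    rw [← le_div_iff₀ hη]; exact Int.floor_le _
  have h2 : x < ((k0 : ℝ) + 1) * η := by
    rw [← div_lt_iff₀ hη]; exact Int.lt_floor_add_one _
  by_cases hc : c ≤ (k0 : ℝ) * η
  · refine ⟨k0, ⟨hc, h1.trans hxd⟩, ?_⟩
    rw [abs_sub_le_iff]
    constructor
    · linarith
    · linarith
  · push_neg at hc
    refine ⟨k0 + 1, ⟨?_, ?_⟩, ?_⟩
    · push_cast; linarith
    · push_cast; linarith
    · rw [abs_sub_le_iff]; push_cast; constructor <;> linarith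

lemma exists_grid_near {N : ℕ} {A : Set (Fin N → ℝ)} {η : ℝ} (hη : 0 < η)
    (hA : UnionOfBoxesSpanGe A η) {a : Fin N → ℝ} (ha : a ∈ A) :
    ∃ b ∈ gridApprox η A, ‖a - b‖ ≤ η := by
  obtain ⟨M, c, d, hcd, hspan, hAeq⟩ := hA
  have ha' := ha
  rw [hAeq, mem_iUnion] at ha'
  obtain ⟨j, haj⟩ := ha'
  choose k hk1 hk2 using fun i => exists_grid_in_Icc hη (hspan j i) (haj i)
  refine ⟨fun i => (k i : ℝ) * η, ⟨?_, fun i => ⟨k i, rfl⟩⟩, ?_⟩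
  · rw [hAeq, mem_iUnion]; exact ⟨j, fun i => hk1 i⟩
  · rw [pi_norm_le_iff_of_nonneg hη.le]
    intro i
    simpa [Real.norm_eq_abs] using hk2 i

lemma grid_mono {N : ℕ} {A B : Set (Fin N → ℝ)} {η : ℝ} (hAB : A ⊆ B) :
    gridApprox η A ⊆ gridApprox η B := fun a ⟨haA, hg⟩ => ⟨hAB haA, hg⟩

/-- Theorem 6.5, first part: for a δ-ISS control system and
quantization parameters satisfying `β(α⁻¹(ε),1) + γ(μ) + η ≤ α⁻¹(ε)` (with
`r = α⁻¹(ε)`), the relation `{(x, x_q) : ‖x − x_q‖ ≤ α⁻¹(ε)}` is an ε-InitSOP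
simulation relation from `S(Σ)` to the symbolic model `S_q(Σ)`. -/
theorem control_initSOP_sim_concrete_to_symbolic {N M P : ℕ}
    (𝕏 𝕊 : Set (Fin N → ℝ)) (𝕌 : Set (Fin M → ℝ))
    (f : (Fin N → ℝ) → (Fin M → ℝ) → Fin N → ℝ)
    (h : (Fin N → ℝ) → Fin P → ℝ)
    (hS𝕏 : 𝕊 ⊆ 𝕏) (hinv : ∀ x ∈ 𝕏, ∀ u ∈ 𝕌, f x u ∈ 𝕏)
    (α : ℝ → ℝ) (hα : ClassKInf α) (hLip : ∀ x y, ‖h x - h y‖ ≤ α ‖x - y‖)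
    (β : ℝ → ℕ → ℝ) (γ : ℝ → ℝ) (hβ : ClassKLNat β) (hγ : ClassKInf γ)
    (hISS : DeltaISS 𝕏 𝕌 f β γ)
    (ε η μ r : ℝ) (hε : 0 < ε) (hη : 0 < η) (hμ : 0 < μ)
    (hr : 0 ≤ r) (hrε : α r = ε)
    (hboxS : UnionOfBoxesSpanGe 𝕊 η) (hboxXS : UnionOfBoxesSpanGe (𝕏 \ 𝕊) η)
    (hboxU : UnionOfBoxesSpanGe 𝕌 μ)
    (hq : β r 1 + γ μ + η ≤ r) :
    InitSOPSim 𝕏 𝕊 (fun x u x' => x ∈ 𝕏 ∧ u ∈ 𝕌 ∧ x' = f x u) h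
      (gridApprox η 𝕏) (gridApprox η 𝕊)
      (fun xq uq xq' => xq ∈ gridApprox η 𝕏 ∧ uq ∈ gridApprox μ 𝕌 ∧
        xq' ∈ gridApprox η 𝕏 ∧ ‖xq' - f xq uq‖ ≤ η) h
      ε {p | p.1 ∈ 𝕏 ∧ p.2 ∈ gridApprox η 𝕏 ∧ ‖p.1 - p.2‖ ≤ r} := by
  -- basic positivity facts
  have hβmono : MonotoneOn (fun s => β s 1) (Ici 0) := ((hβ.1 1).2.1).monotoneOn
  have hβ0 : β 0 1 = 0 := (hβ.1 1).2.2
  have hβr : 0 ≤ β r 1 := by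
    have := hβmono (self_mem_Ici) (show r ∈ Ici 0 from hr) hr
    simpa [hβ0] using this
  have hγmono : MonotoneOn γ (Ici 0) := (hγ.1.2.1).monotoneOn
  have hγ0 : γ 0 = 0 := hγ.1.2.2
  have hγμ : 0 ≤ γ μ := by
    have := hγmono self_mem_Ici (show μ ∈ Ici 0 from hμ.le) hμ.le
    simpa [hγ0] using this
  have hηr : η ≤ r := by linarith
  -- grid approx of 𝕏 near any point of 𝕏
  have gridX : ∀ y ∈ 𝕏, ∃ b ∈ gridApprox η 𝕏, ‖y - b‖ ≤ η := by
    intro y hy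
    by_cases hyS : y ∈ 𝕊
    · obtain ⟨b, hb, hnb⟩ := exists_grid_near hη hboxS hyS
      exact ⟨b, grid_mono hS𝕏 hb, hnb⟩
    · obtain ⟨b, hb, hnb⟩ := exists_grid_near hη hboxXS ⟨hy, hyS⟩
      exact ⟨b, grid_mono diff_subset hb, hnb⟩
  refine ⟨?_, ?_, ?_, ?_, ?_⟩
  · -- secret initial states
    intro xa0 ⟨hxaX, hxaS⟩
    obtain ⟨b, hb, hnb⟩ := exists_grid_near hη hboxS hxaS
    exact ⟨b, ⟨grid_mono hS𝕏 hb, hb⟩, hxaX, grid_mono hS𝕏 hb, hnb.trans hηr⟩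
  · -- non-secret initial states
    intro xb0 ⟨hbX, hbS⟩
    have hnotS : xb0 ∉ 𝕊 := fun hS => hbS ⟨hS, hbX.2⟩
    exact ⟨xb0, ⟨hbX.1, hnotS⟩, hbX.1, hbX, by simp [hr]⟩
  · -- outputs
    intro p ⟨_, _, hpr⟩
    rw [dist_eq_norm, ← hrε]
    exact (hLip p.1 p.2).trans
      (hα.1.2.1.monotoneOn (norm_nonneg _) (show r ∈ Ici 0 from hr) hpr)
  · -- forward simulation
    rintro ⟨x, xq⟩ ⟨hxX, hxqG, hxxq⟩ u x' ⟨_, huU, rfl⟩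
    obtain ⟨uq, huqG, huuq⟩ := exists_grid_near hμ hboxU huU
    have hxqX : xq ∈ 𝕏 := hxqG.1
    have hfX : f xq uq ∈ 𝕏 := hinv xq hxqX uq huqG.1
    obtain ⟨xq', hxq'G, hxq'n⟩ := gridX _ hfX
    have hISS1 : ‖f x u - f xq uq‖ ≤ β ‖x - xq‖ 1 + γ μ := by
      have := hISS x hxX xq hxqX (fun _ => u) (fun _ => uq)
        (fun _ => huU) (fun _ => huqG.1) μ hμ.le (fun _ => huuq) 1
      simpa [sol] using this
    have hβle : β ‖x - xq‖ 1 ≤ β r 1 :=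
      hβmono (norm_nonneg _) (show r ∈ Ici 0 from hr) hxxq
    refine ⟨uq, xq', ⟨hxqG, huqG, hxq'G, by simpa [norm_sub_rev] using hxq'n⟩,
      hinv x hxX u huU, hxq'G, ?_⟩
    calc ‖f x u - xq'‖ ≤ ‖f x u - f xq uq‖ + ‖f xq uq - xq'‖ :=
          norm_sub_le_norm_sub_add_norm_sub (f x u) (f xq uq) xq'
      _ ≤ β r 1 + γ μ + η := by linarith [hISS1, hβle, hxq'n]
      _ ≤ r := hq
  · -- backward simulation
    rintro ⟨x, xq⟩ ⟨hxX, hxqG, hxxq⟩ uq xq' ⟨_, huqG, hxq'G, hxq'n⟩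
    have hxqX : xq ∈ 𝕏 := hxqG.1
    have huqU : uq ∈ 𝕌 := huqG.1
    have hISS1 : ‖f x uq - f xq uq‖ ≤ β ‖x - xq‖ 1 + γ 0 := by
      have := hISS x hxX xq hxqX (fun _ => uq) (fun _ => uq)
        (fun _ => huqU) (fun _ => huqU) 0 le_rfl (fun _ => by simp) 1
      simpa [sol] using this
    have hβle : β ‖x - xq‖ 1 ≤ β r 1 :=
      hβmono (norm_nonneg _) (show r ∈ Ici 0 from hr) hxxq
    refine ⟨uq, f x uq, ⟨hxX, huqU, rfl⟩, hinv x hxX uq huqU, hxq'G, ?_⟩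
    calc ‖f x uq - xq'‖ ≤ ‖f x uq - f xq uq‖ + ‖f xq uq - xq'‖ :=
          norm_sub_le_norm_sub_add_norm_sub (f x uq) (f xq uq) xq'
      _ ≤ β r 1 + η := by
          rw [norm_sub_rev] at hxq'n
          linarith [hISS1, hβle, hxq'n, hγ0.le]
      _ ≤ r := by linarith
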